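/- arXiv:1406.0552 — 4 statements merged into one kernel-verified Lean document; each statement's English description precedes it below -/
import Mathlib

section
/- For every x > 0, the function F1(x) = exp(-x^2)/erfc(x) is strictly increasing, with F1(0) = 1 and F1(x) → +∞ as x → +∞. -/
open Real Filter Topology Set

noncomputable def erf (x : ℝ) : ℝ := (2 / Real.sqrt Real.pi) * ∫ u in (0:ℝ)..x, Real.exp (-u^2)

noncomputable def erfc (x : ℝ) : ℝ := 1 - erf x

noncomputable def F1 (x : ℝ) : ℝ := Real.exp (-x^2) / erfc x

/-!
With `G x = ∫ u in Ioi x, exp (-u ^ 2)` one has `erfc = (2 / √π) • G`, so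
`F1 x = (√π / 2) * exp (-x ^ 2) / G x` and `F1'` has the sign of `exp (-x ^ 2) - 2 x G x`.
For `x > 0` this is positive: on `(x, ∞)` the weight `u / x` exceeds `1`, so
`G x < ∫ u in Ioi x, (u / x) * exp (-u ^ 2) = exp (-x ^ 2) / (2 x)`.
The same bound gives `F1 x > √π x`, hence the limit.
-/

open MeasureTheory

theorem setIntegral_lt_setIntegral {X : Type*} [MeasurableSpace X] {μ : Measure X} {s : Set X}
    {f g : X → ℝ} (hs : MeasurableSet s) (hμs : μ s ≠ 0) (hf : IntegrableOn f s μ)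
    (hg : IntegrableOn g s μ) (hlt : ∀ x ∈ s, f x < g x) :
    ∫ x in s, f x ∂μ < ∫ x in s, g x ∂μ := by
  rw [← sub_pos, ← integral_sub hg hf, setIntegral_pos_iff_support_of_nonneg_ae]
  · have hsupp : s ⊆ Function.support (fun x => g x - f x) ∩ s :=
      fun x hx => ⟨(sub_pos.2 (hlt x hx)).ne', hx⟩
    exact (pos_iff_ne_zero.2 hμs).trans_le (measure_mono hsupp)
  · filter_upwards [ae_restrict_mem hs] with x hx using (sub_pos.2 (hlt x hx)).le
  · exact hg.sub hf

noncomputable def gaussianTail (x : ℝ) : ℝ := ∫ u in Ioi x, exp (-u ^ 2)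

theorem integrableOn_exp_neg_sq (s : Set ℝ) : IntegrableOn (fun u : ℝ => exp (-u ^ 2)) s := by
  simpa using (integrable_exp_neg_mul_sq one_pos).integrableOn

theorem gaussianTail_pos (x : ℝ) : 0 < gaussianTail x := by
  simpa [gaussianTail] using setIntegral_lt_setIntegral measurableSet_Ioi (by simp) integrableOn_zero
    (integrableOn_exp_neg_sq _) fun u _ => exp_pos (-u ^ 2)

theorem gaussianTail_eq_sub_integral (x : ℝ) :
    gaussianTail x = √π / 2 - ∫ u in (0 : ℝ)..x, exp (-u ^ 2) := by
  rw [← intervalIntegral.integral_Ioi_sub_Ioi' (integrableOn_exp_neg_sq _)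
    (integrableOn_exp_neg_sq _), gaussianTail]
  have : ∫ u in Ioi (0 : ℝ), exp (-u ^ 2) = √π / 2 := by simpa using integral_gaussian_Ioi 1
  rw [this]
  ring

theorem erfc_eq_gaussianTail (x : ℝ) : erfc x = 2 / √π * gaussianTail x := by
  have : √π ≠ 0 := by positivity
  rw [erfc, erf, gaussianTail_eq_sub_integral]
  field_simp

theorem hasDerivAt_gaussianTail (x : ℝ) : HasDerivAt gaussianTail (-exp (-x ^ 2)) x := by
  have hcont : Continuous fun u : ℝ => exp (-u ^ 2) := by fun_prop
  simpa [funext gaussianTail_eq_sub_integral] using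
    ((hcont.integral_hasStrictDerivAt 0 x).hasDerivAt.const_sub (√π / 2))

theorem hasDerivAt_exp_neg_sq (x : ℝ) :
    HasDerivAt (fun u : ℝ => exp (-u ^ 2)) (-(2 * x) * exp (-x ^ 2)) x := by
  refine (hasDerivAt_pow 2 x).fun_neg.exp.congr_deriv ?_
  simp only [Nat.cast_ofNat, pow_one, Nat.add_one_sub_one]
  ring

theorem integral_Ioi_mul_exp_neg_sq (x : ℝ) :
    ∫ u in Ioi x, u * exp (-u ^ 2) = exp (-x ^ 2) / 2 := by
  have hderiv (y : ℝ) : HasDerivAt (fun u : ℝ => -exp (-u ^ 2) / 2) (y * exp (-y ^ 2)) y :=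
    (hasDerivAt_exp_neg_sq y).fun_neg.div_const 2 |>.congr_deriv (by ring)
  have hlim : Tendsto (fun u : ℝ => -exp (-u ^ 2) / 2) atTop (𝓝 0) := by
    have : Tendsto (fun u : ℝ => -u ^ 2) atTop atBot :=
      tendsto_neg_atTop_atBot.comp (tendsto_pow_atTop two_ne_zero)
    simpa using ((tendsto_exp_atBot.comp this).neg.div_const 2)
  rw [integral_Ioi_of_hasDerivAt_of_tendsto' (fun y _ => hderiv y)
    (by simpa using (integrable_mul_exp_neg_mul_sq one_pos).integrableOn) hlim]
  ring

theorem two_mul_mul_gaussianTail_lt {x : ℝ} (hx : 0 < x) :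
    2 * x * gaussianTail x < exp (-x ^ 2) := by
  have hlt : gaussianTail x < ∫ u in Ioi x, u * exp (-u ^ 2) / x := by
    refine setIntegral_lt_setIntegral measurableSet_Ioi (by simp) (integrableOn_exp_neg_sq _)
      (by simpa using (integrable_mul_exp_neg_mul_sq one_pos).div_const x |>.integrableOn) ?_
    intro u hu
    rw [lt_div_iff₀ hx, mul_comm]
    exact mul_lt_mul_of_pos_right hu (exp_pos _)
  rw [integral_div, integral_Ioi_mul_exp_neg_sq, lt_div_iff₀ hx] at hlt
  linarith

theorem F1_eq (x : ℝ) : F1 x = √π / 2 * (exp (-x ^ 2) / gaussianTail x) := by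
  have : √π ≠ 0 := by positivity
  rw [F1, erfc_eq_gaussianTail]
  field_simp

theorem hasDerivAt_F1 (x : ℝ) :
    HasDerivAt F1 (√π / 2 * (exp (-x ^ 2) * (exp (-x ^ 2) - 2 * x * gaussianTail x)
      / gaussianTail x ^ 2)) x := by
  rw [funext F1_eq]
  exact ((hasDerivAt_exp_neg_sq x).fun_div (hasDerivAt_gaussianTail x)
    (gaussianTail_pos x).ne').const_mul (√π / 2) |>.congr_deriv (by ring)

theorem deriv_F1_pos {x : ℝ} (hx : 0 < x) : 0 < deriv F1 x := by
  have := sub_pos.2 (two_mul_mul_gaussianTail_lt hx)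
  have := gaussianTail_pos x
  rw [(hasDerivAt_F1 x).deriv]
  positivity

theorem strictMonoOn_F1 : StrictMonoOn F1 (Ici 0) :=
  strictMonoOn_of_deriv_pos (convex_Ici 0)
    (fun x _ => (hasDerivAt_F1 x).continuousAt.continuousWithinAt)
    (fun x hx => deriv_F1_pos (by simpa using hx))

theorem mul_sqrt_pi_lt_F1 {x : ℝ} (hx : 0 < x) : √π * x < F1 x := by
  have := gaussianTail_pos x
  rw [F1_eq, mul_div_assoc', lt_div_iff₀ this]
  nlinarith [two_mul_mul_gaussianTail_lt hx, sqrt_pos.2 pi_pos]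

theorem F1_zero : F1 0 = 1 := by
  simp [F1, erfc, erf]

theorem F1_strictMono_and_limits :
    StrictMonoOn F1 (Set.Ioi 0) ∧ F1 0 = 1 ∧ Tendsto F1 atTop atTop := by
  refine ⟨strictMonoOn_F1.mono Ioi_subset_Ici_self, F1_zero, ?_⟩
  refine tendsto_atTop_mono' atTop ?_ (tendsto_id.const_mul_atTop (sqrt_pos.2 pi_pos))
  filter_upwards [eventually_gt_atTop 0] with x hx using (mul_sqrt_pi_lt_F1 hx).le
end

section
/- Let b, b₂, b₃ > 0 and suppose 0 < b₁ ≤ b₃. Define F(x) = b₁·exp(−b x²)/(1 + b₂·erf(√b·x)) − b₃·exp(−x²)/erfc(x) for x ≥ 0. Then F(x) < x for all x > 0; in particular the equation F(x) = x has no positive solution. -/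
open Real Filter Topology Set

open MeasureTheory in
lemma integrable_gauss' : MeasureTheory.Integrable (fun u : ℝ => Real.exp (-u^2)) := by
  have := integrable_exp_neg_mul_sq (b := 1) one_pos
  simpa using this

open MeasureTheory in
lemma gauss_Ioi_zero : ∫ u in Ioi (0:ℝ), Real.exp (-u^2) = Real.sqrt Real.pi / 2 := by
  have := integral_gaussian_Ioi 1
  simpa using this

open MeasureTheory in
lemma gauss_tail_le (x : ℝ) (hx : 0 ≤ x) :
    ∫ u in Ioi x, Real.exp (-u^2) ≤ Real.exp (-x^2) * (Real.sqrt Real.pi / 2) := by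
  have hmp : MeasurePreserving (fun v : ℝ => v + x) volume volume :=
    measurePreserving_add_right volume x
  have h3 : ∫ u in Ioi x, Real.exp (-(u-x)^2) = ∫ v in Ioi (0:ℝ), Real.exp (-v^2) := by
    have := hmp.setIntegral_image_emb (measurableEmbedding_addRight x)
      (fun u => Real.exp (-(u-x)^2)) (Ioi 0)
    rw [image_add_const_Ioi, zero_add] at this
    rw [this]
    simp
  have h1 : ∫ u in Ioi x, Real.exp (-u^2)
      ≤ ∫ u in Ioi x, Real.exp (-x^2) * Real.exp (-(u-x)^2) := by
    apply setIntegral_mono_on integrable_gauss'.integrableOn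
    · exact ((integrable_gauss'.comp_sub_right x).const_mul _).integrableOn
    · exact measurableSet_Ioi
    · intro u hu
      rw [← Real.exp_add, Real.exp_le_exp]
      have : x < u := hu
      nlinarith
  calc ∫ u in Ioi x, Real.exp (-u^2)
      ≤ ∫ u in Ioi x, Real.exp (-x^2) * Real.exp (-(u-x)^2) := h1
    _ = Real.exp (-x^2) * ∫ u in Ioi x, Real.exp (-(u-x)^2) := integral_const_mul _ _
    _ = Real.exp (-x^2) * (Real.sqrt Real.pi / 2) := by rw [h3, gauss_Ioi_zero]

open MeasureTheory in
lemma gauss_tail_pos (x : ℝ) : 0 < ∫ u in Ioi x, Real.exp (-u^2) := by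
  rw [setIntegral_pos_iff_support_of_nonneg_ae]
  · have : Function.support (fun u : ℝ => Real.exp (-u^2)) = univ := by
      ext u; simp [Real.exp_ne_zero]
    rw [this, univ_inter]
    simp [Real.volume_Ioi]
  · filter_upwards with u using (Real.exp_pos _).le
  · exact integrable_gauss'.integrableOn

lemma erf_nonneg' {x : ℝ} (hx : 0 ≤ x) : 0 ≤ erf x := by
  unfold erf
  apply mul_nonneg (by positivity)
  apply intervalIntegral.integral_nonneg hx
  intro u _; positivity

open MeasureTheory in
lemma erfc_eq (x : ℝ) (hx : 0 ≤ x) :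
    erfc x = (2 / Real.sqrt Real.pi) * ∫ u in Ioi x, Real.exp (-u^2) := by
  unfold erfc erf
  have hsplit : (∫ u in Ioc (0:ℝ) x, Real.exp (-u^2)) + ∫ u in Ioi x, Real.exp (-u^2)
      = ∫ u in Ioi (0:ℝ), Real.exp (-u^2) := by
    rw [← setIntegral_union (Ioc_disjoint_Ioi le_rfl) measurableSet_Ioi
      integrable_gauss'.integrableOn integrable_gauss'.integrableOn,
      Ioc_union_Ioi_eq_Ioi hx]
  rw [intervalIntegral.integral_of_le hx]
  have hpi : (0:ℝ) < Real.sqrt Real.pi := Real.sqrt_pos.2 Real.pi_pos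
  have : (∫ u in Ioc (0:ℝ) x, Real.exp (-u^2))
      = Real.sqrt Real.pi / 2 - ∫ u in Ioi x, Real.exp (-u^2) := by
    rw [← gauss_Ioi_zero, ← hsplit]; ring
  rw [this]
  field_simp
  ring

lemma erfc_pos {x : ℝ} (hx : 0 ≤ x) : 0 < erfc x := by
  rw [erfc_eq x hx]
  have hpi : (0:ℝ) < Real.sqrt Real.pi := Real.sqrt_pos.2 Real.pi_pos
  exact mul_pos (by positivity) (gauss_tail_pos x)

lemma erfc_le {x : ℝ} (hx : 0 ≤ x) : erfc x ≤ Real.exp (-x^2) := by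
  rw [erfc_eq x hx]
  have hpi : (0:ℝ) < Real.sqrt Real.pi := Real.sqrt_pos.2 Real.pi_pos
  have := gauss_tail_le x hx
  calc (2 / Real.sqrt Real.pi) * ∫ u in Ioi x, Real.exp (-u^2)
      ≤ (2 / Real.sqrt Real.pi) * (Real.exp (-x^2) * (Real.sqrt Real.pi / 2)) := by
        apply mul_le_mul_of_nonneg_left this (by positivity)
    _ = Real.exp (-x^2) := by field_simp
  
theorem F_no_positive_fixed_point (b b1 b2 b3 : ℝ) (hb : 0 < b) (hb2 : 0 < b2) (hb3 : 0 < b3)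
    (hb1 : 0 < b1) (hle : b1 ≤ b3) :
    ∀ x : ℝ, 0 < x →
      b1 * Real.exp (-(b * x^2)) / (1 + b2 * erf (Real.sqrt b * x))
        - b3 * (Real.exp (-x^2) / erfc x) < x := by
  intro x hx
  have hxs : 0 ≤ Real.sqrt b * x := mul_nonneg (Real.sqrt_nonneg b) hx.le
  have hden : (1:ℝ) ≤ 1 + b2 * erf (Real.sqrt b * x) := by
    nlinarith [erf_nonneg' hxs]
  have hnum : b1 * Real.exp (-(b * x^2)) ≤ b1 := by
    nlinarith [Real.exp_le_one_iff.2 (by nlinarith : -(b * x^2) ≤ 0), Real.exp_pos (-(b * x^2))]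
  have hA : b1 * Real.exp (-(b * x^2)) / (1 + b2 * erf (Real.sqrt b * x)) ≤ b1 :=
    le_trans (div_le_self (by positivity) hden) hnum
  have hB : (1:ℝ) ≤ Real.exp (-x^2) / erfc x :=
    (one_le_div (erfc_pos hx.le)).2 (erfc_le hx.le)
  have : b3 ≤ b3 * (Real.exp (-x^2) / erfc x) := by nlinarith
  nlinarith
end

section
/- Let b, b₃ > 0, and for h > 0 set b₁(h) = A·h and b₂(h) = B·h with fixed A, B > 0. For h large, let λ(h) be the unique positive solution of F_h(x) = x with F_h(x) = b₁(h)·exp(−b x²)/(1 + b₂(h)·erf(√b·x)) − b₃·exp(−x²)/erfc(x). Then as h → +∞, λ(h) converges to the unique positive solution λ_∞ of (A/B)·exp(−b x²)/erf(√b·x) − b₃·exp(−x²)/erfc(x) = x. -/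
open Real Filter Topology Set

private lemma cont_ens : Continuous fun u : ℝ => Real.exp (-u^2) := by
  have h : Continuous fun u : ℝ => -u^2 := by continuity
  exact Real.continuous_exp.comp h

private lemma ii_ens (a c : ℝ) :
    IntervalIntegrable (fun u : ℝ => Real.exp (-u^2)) MeasureTheory.volume a c :=
  cont_ens.intervalIntegrable a c

private lemma csp_pos : 0 < 2 / Real.sqrt Real.pi :=
  div_pos two_pos (Real.sqrt_pos.mpr Real.pi_pos)

lemma erf_continuous : Continuous erf :=
  continuous_const.mul (intervalIntegral.continuous_primitive (fun a c => ii_ens a c) 0)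

lemma erfc_continuous : Continuous erfc := by
  have : erfc = fun x => 1 - erf x := rfl
  rw [this]; exact continuous_const.sub erf_continuous

lemma erf_mono {x y : ℝ} (hx : 0 ≤ x) (hxy : x ≤ y) : erf x ≤ erf y := by
  unfold erf
  refine mul_le_mul_of_nonneg_left ?_ csp_pos.le
  exact intervalIntegral.integral_mono_interval le_rfl hx hxy
    (Filter.Eventually.of_forall fun u => (Real.exp_pos _).le) (ii_ens 0 y)

lemma erf_zero : erf 0 = 0 := by simp [erf]

lemma erf_pos {x : ℝ} (hx : 0 < x) : 0 < erf x :=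
  mul_pos csp_pos (intervalIntegral.intervalIntegral_pos_of_pos (ii_ens 0 x) (fun u => Real.exp_pos _) hx)

lemma erf_lt_one {x : ℝ} (hx : 0 < x) : erf x < 1 := by
  have hint : MeasureTheory.Integrable (fun u : ℝ => Real.exp (-u^2)) := by
    have := integrable_exp_neg_mul_sq (one_pos (α := ℝ))
    simpa using this
  have hIoi : (0:ℝ) < ∫ u in Ioi x, Real.exp (-u^2) := by
    rw [MeasureTheory.setIntegral_pos_iff_support_of_nonneg_ae
      (Filter.Eventually.of_forall fun u => (Real.exp_pos _).le) hint.integrableOn]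
    have hs : Function.support (fun u : ℝ => Real.exp (-u^2)) = Set.univ := by
      ext u; simp [Function.support, (Real.exp_pos _).ne']
    rw [hs, Set.univ_inter]
    simp
  have hsplit : (∫ u in Ioi (0:ℝ), Real.exp (-u^2))
      = (∫ u in Ioc (0:ℝ) x, Real.exp (-u^2)) + ∫ u in Ioi x, Real.exp (-u^2) := by
    rw [← MeasureTheory.setIntegral_union (Set.Ioc_disjoint_Ioi le_rfl) measurableSet_Ioi
      hint.integrableOn hint.integrableOn, Set.Ioc_union_Ioi_eq_Ioi hx.le]
  have hgauss : (∫ u in Ioi (0:ℝ), Real.exp (-u^2)) = Real.sqrt Real.pi / 2 := by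
    have := integral_gaussian_Ioi 1
    simpa using this
  have h2 : (∫ u in (0:ℝ)..x, Real.exp (-u^2)) < Real.sqrt Real.pi / 2 := by
    rw [intervalIntegral.integral_of_le hx.le]
    linarith [hsplit, hgauss]
  have hsp : 0 < Real.sqrt Real.pi := Real.sqrt_pos.mpr Real.pi_pos
  unfold erf
  calc (2 / Real.sqrt Real.pi) * ∫ u in (0:ℝ)..x, Real.exp (-u^2)
      < (2 / Real.sqrt Real.pi) * (Real.sqrt Real.pi / 2) := by
        exact mul_lt_mul_of_pos_left h2 csp_pos
    _ = 1 := by field_simp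

lemma erf_le_linear {x : ℝ} (hx : 0 ≤ x) : erf x ≤ (2 / Real.sqrt Real.pi) * x := by
  unfold erf
  refine mul_le_mul_of_nonneg_left ?_ csp_pos.le
  calc (∫ u in (0:ℝ)..x, Real.exp (-u^2)) ≤ ∫ _u in (0:ℝ)..x, (1:ℝ) := by
        refine intervalIntegral.integral_mono_on hx (ii_ens 0 x)
          (intervalIntegrable_const) (fun u _ => ?_)
        rw [Real.exp_le_one_iff]
        nlinarith
    _ = x := by simp

set_option maxHeartbeats 2000000 in
theorem lambda_tendsto_neumann (b b3 A B : ℝ) (hb : 0 < b) (hb3 : 0 < b3)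
    (hA : 0 < A) (hB : 0 < B) (lam : ℝ → ℝ) (linf : ℝ)
    (hfix : ∀ᶠ h in atTop, 0 < lam h ∧
      A * h * Real.exp (-(b * (lam h)^2)) / (1 + B * h * erf (Real.sqrt b * lam h))
        - b3 * (Real.exp (-(lam h)^2) / erfc (lam h)) = lam h)
    (hlinf : 0 < linf ∧
      (A / B) * (Real.exp (-(b * linf^2)) / erf (Real.sqrt b * linf))
        - b3 * (Real.exp (-linf^2) / erfc linf) = linf)
    (huniq : ∀ y : ℝ, 0 < y ∧
      (A / B) * (Real.exp (-(b * y^2)) / erf (Real.sqrt b * y))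
        - b3 * (Real.exp (-y^2) / erfc y) = y → y = linf) :
    Tendsto lam atTop (nhds linf) := by
  set G : ℝ → ℝ := fun x => (A / B) * (Real.exp (-(b * x^2)) / erf (Real.sqrt b * x))
      - b3 * (Real.exp (-x^2) / erfc x) with hGdef
  have hsb : 0 < Real.sqrt b := Real.sqrt_pos.mpr hb
  have hsp : 0 < Real.sqrt Real.pi := Real.sqrt_pos.mpr Real.pi_pos
  set M : ℝ := max 1 ((A / B) / erf (Real.sqrt b)) with hMdef
  have hM1 : (1:ℝ) ≤ M := le_max_left _ _
  have hMax : (A / B) / erf (Real.sqrt b) ≤ M := le_max_right _ _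
  have hMpos : 0 < M := lt_of_lt_of_le one_pos hM1
  have herfcM : 0 < erfc M := by
    have := erf_lt_one hMpos
    unfold erfc; linarith
  set C : ℝ := b3 / erfc M with hCdef
  have hCpos : 0 < C := div_pos hb3 herfcM
  set e0 : ℝ := A * Real.exp (-(b * M^2)) / (B * (M + C)) with he0def
  have he0pos : 0 < e0 :=
    div_pos (mul_pos hA (Real.exp_pos _)) (mul_pos hB (by linarith))
  set a0 : ℝ := (e0 / 2) * Real.sqrt Real.pi / (2 * Real.sqrt b) with ha0def
  have ha0pos : 0 < a0 :=
    div_pos (mul_pos (by linarith) hsp) (by linarith)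
  -- minimum of |G - id| on the bad compact set
  rw [Metric.tendsto_nhds]
  intro ε hε
  set K : Set ℝ := Icc a0 M ∩ {y | ε ≤ |y - linf|} with hKdef
  have hKcl : IsCompact K := by
    apply isCompact_Icc.inter_right
    exact isClosed_le continuous_const ((continuous_id.sub continuous_const).abs)
  have hc1 : Continuous fun x : ℝ => Real.exp (-(b * x^2)) :=
    Real.continuous_exp.comp (continuous_const.mul (continuous_pow 2)).neg
  have hc3 : Continuous fun x : ℝ => erf (Real.sqrt b * x) :=
    erf_continuous.comp (continuous_const.mul continuous_id)
  have hGcont : ContinuousOn G (Icc a0 M) := by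
    apply ContinuousOn.sub
    · apply ContinuousOn.mul continuousOn_const
      apply ContinuousOn.div hc1.continuousOn hc3.continuousOn
      intro y hy
      exact (erf_pos (mul_pos hsb (ha0pos.trans_le hy.1))).ne'
    · apply ContinuousOn.mul continuousOn_const
      apply ContinuousOn.div cont_ens.continuousOn erfc_continuous.continuousOn
      intro y hy
      have h1 := erf_lt_one (ha0pos.trans_le hy.1)
      have h2 : 0 < erfc y := by unfold erfc; linarith
      exact h2.ne'
  obtain ⟨m, hm_pos, hmK⟩ : ∃ m : ℝ, 0 < m ∧ ∀ y ∈ K, m ≤ |G y - y| := by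
    by_cases hK : K.Nonempty
    · have hcont : ContinuousOn (fun y => |G y - y|) K :=
        ((hGcont.mono inter_subset_left).sub continuousOn_id).abs
      obtain ⟨y0, hy0K, hy0min⟩ := hKcl.exists_isMinOn hK hcont
      refine ⟨|G y0 - y0|, ?_, fun y hy => isMinOn_iff.mp hy0min y hy⟩
      obtain ⟨hy0I, hy0d⟩ := hy0K
      have hy0pos : 0 < y0 := ha0pos.trans_le hy0I.1
      have hne : G y0 ≠ y0 := by
        intro hEq
        have h0 := huniq y0 ⟨hy0pos, hEq⟩
        rw [h0] at hy0d
        simp only [mem_setOf_eq, sub_self, abs_zero] at hy0d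
        linarith
      exact abs_pos.mpr (sub_ne_zero.mpr hne)
    · exact ⟨1, one_pos, fun y hy => absurd ⟨y, hy⟩ hK⟩
  set m' : ℝ := min m 1 with hm'def
  have hm'pos : 0 < m' := lt_min hm_pos one_pos
  have hm'le : m' ≤ m := min_le_left m 1
  clear_value m' K a0 e0 C M G
  -- eventual estimates
  filter_upwards [hfix, eventually_ge_atTop (1:ℝ),
    eventually_ge_atTop (2 / (B * e0)),
    eventually_ge_atTop ((4 * A) / (B^2 * e0^2 * m') + 1)] with h hfx h1 h2 h3
  obtain ⟨hpos, heq⟩ := hfx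
  set l : ℝ := lam h with hldef
  have hhpos : (0:ℝ) < h := lt_of_lt_of_le one_pos h1
  set E : ℝ := erf (Real.sqrt b * l) with hEdef
  have hEpos : 0 < E := erf_pos (mul_pos hsb hpos)
  have hEcpos : 0 < erfc l := by
    have := erf_lt_one hpos
    unfold erfc; linarith
  set D : ℝ := 1 + B * h * E with hDdef
  have hBhE : 0 < B * h * E := mul_pos (mul_pos hB hhpos) hEpos
  have hDpos : 0 < D := by rw [hDdef]; linarith
  set T2 : ℝ := b3 * (Real.exp (-l^2) / erfc l) with hT2def
  have hT2pos : 0 < T2 := by rw [hT2def]; positivity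
  clear_value T2 D E l
  have heq' : A * h * Real.exp (-(b * l^2)) / D - T2 = l := heq
  -- (u1) l ≤ (A/B) * (exp(-(b l^2))/E)
  have hu1 : l ≤ (A / B) * (Real.exp (-(b * l^2)) / E) := by
    have hle : A * h * Real.exp (-(b * l^2)) / D
        ≤ A * h * Real.exp (-(b * l^2)) / (B * h * E) := by
      apply div_le_div_of_nonneg_left (by positivity) hBhE
      rw [hDdef]; linarith
    have hEqn : A * h * Real.exp (-(b * l^2)) / (B * h * E)
        = (A / B) * (Real.exp (-(b * l^2)) / E) := by
      field_simp
    rw [hEqn] at hle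
    linarith
  -- (u2) l ≤ M
  have hexp1 : Real.exp (-(b * l^2)) ≤ 1 := by
    rw [Real.exp_le_one_iff]
    have := sq_nonneg l
    nlinarith
  have hu2 : l ≤ M := by
    rcases le_or_gt l 1 with hl1 | hl1
    · linarith
    · have hEb : erf (Real.sqrt b) ≤ E := by
        rw [hEdef]
        exact erf_mono hsb.le (le_mul_of_one_le_right hsb.le hl1.le)
      have herfb : 0 < erf (Real.sqrt b) := erf_pos hsb
      have hq : Real.exp (-(b * l^2)) / E ≤ 1 / erf (Real.sqrt b) :=
        div_le_div₀ (by norm_num) hexp1 herfb hEb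
      have : (A / B) * (Real.exp (-(b * l^2)) / E)
          ≤ (A / B) / erf (Real.sqrt b) := by
        have := mul_le_mul_of_nonneg_left hq (le_of_lt (div_pos hA hB))
        calc (A / B) * (Real.exp (-(b * l^2)) / E)
            ≤ (A / B) * (1 / erf (Real.sqrt b)) := this
          _ = (A / B) / erf (Real.sqrt b) := by ring
      linarith
  -- (u3)/(u4) T2 ≤ C
  have hu3 : erfc M ≤ erfc l := by
    have := erf_mono hpos.le hu2
    unfold erfc; linarith
  have hexp2 : Real.exp (-l^2) ≤ 1 := by
    rw [Real.exp_le_one_iff]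
    have := sq_nonneg l
    linarith
  have hu4 : T2 ≤ C := by
    rw [hT2def, hCdef]
    have hq : Real.exp (-l^2) / erfc l ≤ 1 / erfc M :=
      div_le_div₀ (by norm_num) hexp2 herfcM hu3
    calc b3 * (Real.exp (-l^2) / erfc l) ≤ b3 * (1 / erfc M) :=
          mul_le_mul_of_nonneg_left hq hb3.le
      _ = b3 / erfc M := by ring
  -- (u6) E ≥ e0/2
  have hBh : 0 < B * h := mul_pos hB hhpos
  have hMC : 0 < M + C := by linarith only [hMpos, hCpos]
  have hu5 : A * h * Real.exp (-(b * l^2)) = (l + T2) * D := by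
    have h9 : A * h * Real.exp (-(b * l^2)) / D = l + T2 := by linarith only [heq']
    field_simp [hDpos.ne'] at h9
    linarith only [h9]
  have hlT2pos : 0 < l + T2 := by linarith only [hpos, hT2pos]
  have hexpM : Real.exp (-(b * M^2)) ≤ Real.exp (-(b * l^2)) := by
    apply Real.exp_le_exp.mpr
    have hsq : l^2 ≤ M^2 := by nlinarith only [hpos.le, hu2, hMpos.le]
    nlinarith only [mul_le_mul_of_nonneg_left hsq hb.le]
  have hu6 : e0 / 2 ≤ E := by
    have k1 : A * h * Real.exp (-(b * M^2)) ≤ (l + T2) * D := by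
      calc A * h * Real.exp (-(b * M^2)) ≤ A * h * Real.exp (-(b * l^2)) := by
            apply mul_le_mul_of_nonneg_left hexpM (by positivity)
        _ = (l + T2) * D := hu5
    have k2 : (l + T2) * D ≤ (M + C) * D :=
      mul_le_mul_of_nonneg_right (by linarith only [hu2, hu4]) hDpos.le
    have k3 : A * h * Real.exp (-(b * M^2)) = B * h * e0 * (M + C) := by
      rw [he0def]
      field_simp
    have k4 : B * h * e0 * (M + C) ≤ (M + C) * D := by linarith only [k1, k2, k3]
    have hD_ge : B * h * e0 ≤ D := by nlinarith only [k4, hMC]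
    have hBh1 : 1 ≤ B * h * (e0 / 2) := by
      have h9 : 2 / (B * e0) ≤ h := h2
      rw [div_le_iff₀ (by positivity)] at h9
      nlinarith only [h9]
    have h10 : B * h * (e0 / 2) ≤ B * h * E := by
      rw [hDdef] at hD_ge
      linarith only [hD_ge, hBh1]
    nlinarith only [h10, hBh]
  -- (u7) a0 ≤ l
  have hu7 : a0 ≤ l := by
    have hlin : E ≤ (2 / Real.sqrt Real.pi) * (Real.sqrt b * l) := by
      rw [hEdef]
      exact erf_le_linear (mul_pos hsb hpos).le
    rw [ha0def, div_le_iff₀ (by positivity)]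
    have key : e0 / 2 ≤ (2 / Real.sqrt Real.pi) * (Real.sqrt b * l) := le_trans hu6 hlin
    have key2 : (e0 / 2) * Real.sqrt Real.pi ≤ 2 * (Real.sqrt b * l) := by
      have h9 := mul_le_mul_of_nonneg_right key hsp.le
      have hr : (2 / Real.sqrt Real.pi) * (Real.sqrt b * l) * Real.sqrt Real.pi
          = 2 * (Real.sqrt b * l) := by field_simp
      rw [hr] at h9
      linarith only [h9]
    linarith only [key2]
  -- (u8) 0 ≤ G l - l ≤ 4A/(B² e0² h) < m'
  have hD'ne : (1 + B * h * E) ≠ 0 := by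
    rw [hDdef] at hDpos; exact hDpos.ne'
  have hid : G l - l = A * Real.exp (-(b * l^2)) / (B * E * D) := by
    have hGl : G l = (A / B) * (Real.exp (-(b * l^2)) / E) - T2 := by
      simp only [hGdef]
      rw [← hEdef, ← hT2def]
    have h9 : l + T2 = A * h * Real.exp (-(b * l^2)) / D := by linarith only [heq']
    have h10 : (A / B) * (Real.exp (-(b * l^2)) / E) - A * h * Real.exp (-(b * l^2)) / D
        = A * Real.exp (-(b * l^2)) / (B * E * D) := by
      rw [hDdef]
      field_simp
      ring
    rw [hGl]
    linarith only [h9, h10]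
  have hδ0 : 0 ≤ G l - l := by
    rw [hid]; positivity
  have hDge : B * h * (e0 / 2) ≤ D := by
    have m1 : B * h * (e0 / 2) ≤ B * h * E := by nlinarith only [hu6, hBh]
    rw [hDdef]
    linarith only [m1, hBhE]
  have hDenom : B * (e0 / 2) * (B * h * (e0 / 2)) ≤ B * E * D := by
    have h1' : B * (e0 / 2) ≤ B * E := mul_le_mul_of_nonneg_left hu6 hB.le
    have hp2 : 0 < B * h * (e0 / 2) := by positivity
    exact mul_le_mul h1' hDge hp2.le (by positivity)
  have hδle : G l - l ≤ (4 * A) / (B^2 * e0^2 * h) := by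
    rw [hid]
    have step1 : A * Real.exp (-(b * l^2)) / (B * E * D)
        ≤ A / (B * (e0 / 2) * (B * h * (e0 / 2))) := by
      apply div_le_div₀ (by positivity) ?_ (by positivity) hDenom
      nlinarith only [hexp1, hA.le]
    have step2 : A / (B * (e0 / 2) * (B * h * (e0 / 2)))
        = (4 * A) / (B^2 * e0^2 * h) := by
      rw [div_eq_div_iff (by positivity) (by positivity)]
      ring
    exact step1.trans step2.le
  have hδlt : G l - l < m' := by
    have hX : 0 < B^2 * e0^2 * h := by positivity
    have hfrac : (4 * A) / (B^2 * e0^2 * h) < m' := by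
      rw [div_lt_iff₀ hX]
      have h9 : (4 * A) / (B^2 * e0^2 * m') < h := by linarith only [h3]
      rw [div_lt_iff₀ (by positivity)] at h9
      nlinarith only [h9]
    linarith only [hδle, hfrac]
  -- conclude
  have habs : |G l - l| < m := by
    rw [abs_of_nonneg hδ0]
    linarith only [hδlt, hm'le]
  by_contra hcon
  have hdist : ε ≤ |l - linf| := by
    rw [Real.dist_eq] at hcon
    push_neg at hcon
    exact hcon
  have hlK : l ∈ K := by rw [hKdef]; exact ⟨⟨hu7, hu2⟩, hdist⟩
  exact absurd habs (not_lt.mpr (hmK l hlK))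
end

section
/- Let α_ℓ, k_ℓ, h₀ > 0 and T_∞ < T_i. The function T_ℓ(x,t) = T_i − ((T_i − T_∞)/(1 + k_ℓ/(h₀√(α_ℓ π))))·erfc(x/(2√(α_ℓ t))) defined for x > 0, t > 0 satisfies the heat equation ρ c_ℓ ∂_t T_ℓ = k_ℓ ∂_{xx} T_ℓ (with α_ℓ = k_ℓ/(ρ c_ℓ)), the convective boundary condition k_ℓ ∂_x T_ℓ(0,t) = (h₀/√t)(T_ℓ(0,t) − T_∞) for t > 0, and T_ℓ(x,t) → T_i as t → 0⁺ for each fixed x > 0. -/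
open Real Filter Topology Set

/-!
The profile `erfc (x / (2 √(α t)))` is the classical similarity solution of `∂ₜ u = α ∂ₓₓ u`:
both sides equal `(2/√π) · exp (-(x/s)²) · 2αx / s³` with `s = 2√(α t)`. It is `1` at `x = 0` and
tends to `0` as `t → 0⁺` for `x > 0`, because its argument tends to `+∞` and `erf` tends to `1`
(the Gaussian integral). The amplitude `(Tᵢ - T∞) / (1 + k / (h₀ √(α π)))` is exactly the one for
which the Robin condition holds at `x = 0`, the factor `√t` cancelling on both sides.
-/

open MeasureTheory

theorem hasDerivAt_erf (x : ℝ) : HasDerivAt erf (2 / √π * exp (-x ^ 2)) x := by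
  have hc : Continuous fun u : ℝ => exp (-u ^ 2) := by fun_prop
  exact (intervalIntegral.integral_hasDerivAt_right (hc.intervalIntegrable 0 x)
    (hc.stronglyMeasurableAtFilter _ _) hc.continuousAt).const_mul _

theorem hasDerivAt_erfc (x : ℝ) : HasDerivAt erfc (-(2 / √π * exp (-x ^ 2))) x :=
  (hasDerivAt_erf x).const_sub 1

theorem erfc_zero : erfc 0 = 1 := by simp [erfc, erf]

theorem tendsto_erf_atTop : Tendsto erf atTop (𝓝 1) := by
  have hint : IntegrableOn (fun u : ℝ => exp (-u ^ 2)) (Ioi 0) := by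
    simpa using (integrable_exp_neg_mul_sq one_pos).integrableOn
  have hgauss : ∫ u in Ioi (0:ℝ), exp (-u ^ 2) = √π / 2 := by
    simpa using integral_gaussian_Ioi 1
  have h := (intervalIntegral_tendsto_integral_Ioi 0 hint tendsto_id).const_mul (2 / √π)
  rw [hgauss, show 2 / √π * (√π / 2) = 1 by field_simp] at h
  exact h

theorem tendsto_erfc_atTop : Tendsto erfc atTop (𝓝 0) := by
  have h := tendsto_erf_atTop.const_sub 1
  rw [sub_self] at h
  exact h

section Similarity

variable {α : ℝ}

theorem hasDerivAt_erfc_div (s x : ℝ) :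
    HasDerivAt (fun y => erfc (y / s)) (-(2 / √π * exp (-(x / s) ^ 2)) / s) x := by
  refine ((hasDerivAt_erfc (x / s)).comp x ((hasDerivAt_id' x).div_const s)).congr_deriv ?_
  ring

theorem deriv_erfc_div (s : ℝ) :
    deriv (fun y => erfc (y / s)) = fun x => -(2 / √π * exp (-(x / s) ^ 2)) / s :=
  funext fun x => (hasDerivAt_erfc_div s x).deriv

theorem hasDerivAt_deriv_erfc_div (s x : ℝ) :
    HasDerivAt (deriv fun y => erfc (y / s)) (2 / √π * exp (-(x / s) ^ 2) * (2 * x / s ^ 3)) x := by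
  rw [deriv_erfc_div]
  have hsq : HasDerivAt (fun y => -(y / s) ^ 2) (-(2 * (x / s) * (1 / s))) x := by
    refine (((hasDerivAt_id' x).div_const s).fun_pow 2).fun_neg.congr_deriv ?_
    ring
  refine ((hsq.exp.const_mul (2 / √π)).fun_neg.div_const s).congr_deriv ?_
  ring

theorem hasDerivAt_erfc_similarity_time (hα : 0 < α) {t : ℝ} (ht : 0 < t) (x : ℝ) :
    HasDerivAt (fun τ => erfc (x / (2 * √(α * τ))))
      (2 / √π * exp (-(x / (2 * √(α * t))) ^ 2) * (2 * x / (2 * √(α * t)) ^ 3) * α) t := by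
  have hαt : 0 < α * t := mul_pos hα ht
  have hs : HasDerivAt (fun τ => 2 * √(α * τ)) (2 * (1 / (2 * √(α * t)) * (α * 1))) t :=
    ((hasDerivAt_sqrt hαt.ne').comp t ((hasDerivAt_id t).const_mul α)).const_mul 2
  have hquot := (hasDerivAt_const t x).fun_div hs (by positivity)
  refine ((hasDerivAt_erfc _).comp t hquot).congr_deriv ?_
  field_simp
  ring

theorem heat_eq_erfc_similarity (A B : ℝ) (hα : 0 < α) {t : ℝ} (ht : 0 < t) (x : ℝ) :
    deriv (fun τ => A - B * erfc (x / (2 * √(α * τ)))) t =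
      α * deriv (deriv fun y => A - B * erfc (y / (2 * √(α * t)))) x := by
  set s := 2 * √(α * t)
  have hspace :
      deriv (fun y => A - B * erfc (y / s)) = fun y => -B * deriv (fun y => erfc (y / s)) y :=
    funext fun y => by
      rw [(((hasDerivAt_erfc_div s y).const_mul B).const_sub A).deriv, deriv_erfc_div]; ring
  rw [hspace, ((hasDerivAt_erfc_similarity_time hα ht x).const_mul B |>.const_sub A).deriv,
    ((hasDerivAt_deriv_erfc_div s x).const_mul (-B)).deriv]
  ring

theorem tendsto_div_two_sqrt_mul_nhdsGT_zero (hα : 0 < α) {x : ℝ} (hx : 0 < x) :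
    Tendsto (fun t => x / (2 * √(α * t))) (𝓝[>] 0) atTop := by
  have hs : Tendsto (fun t => 2 * √(α * t)) (𝓝[>] 0) (𝓝[>] 0) := by
    refine tendsto_nhdsWithin_iff.mpr ⟨?_, ?_⟩
    · exact ((by fun_prop : Continuous fun t => 2 * √(α * t)).tendsto' 0 0 (by simp)).mono_left
        nhdsWithin_le_nhds
    · filter_upwards [self_mem_nhdsWithin] with t (ht : 0 < t)
      exact mem_Ioi.mpr (by positivity)
  simpa [div_eq_mul_inv] using hs.inv_tendsto_nhdsGT_zero.const_mul_atTop hx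

end Similarity

theorem heat_transfer_solution_verification_general (αl kl h0 ρ cl Tinf Ti : ℝ)
    (hαl : 0 < αl) (hkl : 0 < kl) (hh0 : 0 < h0) (hρ : 0 < ρ) (hcl : 0 < cl)
    (hα : αl = kl / (ρ * cl))
    (Tl : ℝ → ℝ → ℝ)
    (hTl : ∀ x t, Tl x t =
      Ti - (Ti - Tinf) / (1 + kl / (h0 * Real.sqrt (αl * Real.pi)))
        * erfc (x / (2 * Real.sqrt (αl * t)))) :
    (∀ x t, 0 < x → 0 < t →
      ρ * cl * deriv (fun τ => Tl x τ) t = kl * deriv (deriv (fun y => Tl y t)) x) ∧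
    (∀ t, 0 < t →
      kl * deriv (fun y => Tl y t) 0 = h0 / Real.sqrt t * (Tl 0 t - Tinf)) ∧
    (∀ x, 0 < x →
      Tendsto (fun t => Tl x t) (nhdsWithin 0 (Set.Ioi 0)) (nhds Ti)) := by
  set C := (Ti - Tinf) / (1 + kl / (h0 * √(αl * π))) with hC
  have hT : Tl = fun x t => Ti - C * erfc (x / (2 * √(αl * t))) := funext₂ hTl
  subst hT
  beta_reduce
  have hkl_eq : kl = ρ * cl * αl := by rw [hα]; field_simp
  refine ⟨fun x t _ ht => ?_, fun t ht => ?_, fun x hx => ?_⟩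
  · rw [hkl_eq, heat_eq_erfc_similarity Ti C hαl ht x]
    ring
  · have hflux : deriv (fun y => Ti - C * erfc (y / (2 * √(αl * t)))) 0 =
        C * (2 / √π) / (2 * √(αl * t)) := by
      rw [(((hasDerivAt_erfc_div _ 0).const_mul C).const_sub Ti).deriv]
      simp only [zero_div, ne_eq, OfNat.ofNat_ne_zero, not_false_eq_true, zero_pow, neg_zero,
        exp_zero, mul_one]
      ring
    rw [hflux]
    simp only [zero_div, erfc_zero, hC, sqrt_mul hαl.le]
    field_simp
    ring
  · simpa using (tendsto_erfc_atTop.comp (tendsto_div_two_sqrt_mul_nhdsGT_zero hαl hx)).const_mul C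
      |>.const_sub Ti

theorem heat_transfer_solution_verification (αl kl h0 ρ cl Tinf Ti : ℝ)
    (hαl : 0 < αl) (hkl : 0 < kl) (hh0 : 0 < h0) (hρ : 0 < ρ) (hcl : 0 < cl)
    (hα : αl = kl / (ρ * cl)) (hT : Tinf < Ti)
    (Tl : ℝ → ℝ → ℝ)
    (hTl : ∀ x t, Tl x t =
      Ti - (Ti - Tinf) / (1 + kl / (h0 * Real.sqrt (αl * Real.pi)))
        * erfc (x / (2 * Real.sqrt (αl * t)))) :
    (∀ x t, 0 < x → 0 < t →
      ρ * cl * deriv (fun τ => Tl x τ) t = kl * deriv (deriv (fun y => Tl y t)) x) ∧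
    (∀ t, 0 < t →
      kl * deriv (fun y => Tl y t) 0 = h0 / Real.sqrt t * (Tl 0 t - Tinf)) ∧
    (∀ x, 0 < x →
      Tendsto (fun t => Tl x t) (nhdsWithin 0 (Set.Ioi 0)) (nhds Ti)) :=
  heat_transfer_solution_verification_general αl kl h0 ρ cl Tinf Ti hαl hkl hh0 hρ hcl hα Tl hTl
end
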